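/- arXiv:1412.4456 — 2 statements merged into one kernel-verified Lean document; each statement's English description precedes it below -/
import Mathlib

section
/- For every uniform, budget-balanced, stable cost sharing protocol ξ on the player set N = {1,…,n} (n ≥ 2) and every ε ∈ (0,1), there exists an n-player resource allocation model with anonymous convex cost functions such that, in the induced cost sharing game with cost shares given by ξ, every pure Nash equilibrium P satisfies C(P) ≥ (n − ε) · C(Q̂), where Q̂ is a socially optimal strategy vector with C(Q̂) > 0; hence the price of stability under ξ is at least n − ε. -/
open Finset

/-- A valid resource cost function: nonnegative, nondecreasing, zero at `∅`. -/
def IsCostFn (n : ℕ) (C : Finset (Fin n) → ℝ) : Prop :=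
  C ∅ = 0 ∧ (∀ T, 0 ≤ C T) ∧ ∀ T U : Finset (Fin n), T ⊆ U → C T ≤ C U

/-- An anonymous cost function depends only on the number of users. -/
def AnonymousCost (n : ℕ) (C : Finset (Fin n) → ℝ) : Prop :=
  ∀ X Y : Finset (Fin n), X.card = Y.card → C X = C Y

/-- A convex (supermodular) cost function. -/
def ConvexCost (n : ℕ) (C : Finset (Fin n) → ℝ) : Prop :=
  ∀ (X Y : Finset (Fin n)) (i : Fin n), X ⊆ Y → i ∉ Y →
    C (insert i X) - C X ≤ C (insert i Y) - C Y

/-- A (uniform) cost sharing protocol: it assigns to every cost function `C`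
and every set `S` of users a cost share for each player, depending only on
this local information. -/
abbrev Protocol (n : ℕ) := (Finset (Fin n) → ℝ) → Finset (Fin n) → Fin n → ℝ

/-- `users P r = P^r = {i : r ∈ P_i}`, the set of players using resource `r`. -/
def users {n : ℕ} {R : Type*} [DecidableEq R]
    (P : Fin n → Finset R) (r : R) : Finset (Fin n) :=
  Finset.univ.filter (fun i => r ∈ P i)

/-- The private cost of player `i` under protocol `ξ`:
`C_i(P) = Σ_{r ∈ P_i} ξ_i(C^r, P^r)`. -/
def privCost {n : ℕ} {R : Type*} [DecidableEq R] (ξ : Protocol n)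
    (Cr : R → Finset (Fin n) → ℝ) (P : Fin n → Finset R) (i : Fin n) : ℝ :=
  ∑ r ∈ P i, ξ (Cr r) (users P r) i

/-- The social cost `C(P) = Σ_{r ∈ R} C^r(P^r)`. -/
def socCost {n : ℕ} {R : Type*} [Fintype R] [DecidableEq R]
    (Cr : R → Finset (Fin n) → ℝ) (P : Fin n → Finset R) : ℝ :=
  ∑ r : R, Cr r (users P r)

/-- `P` is a pure Nash equilibrium of the game induced by protocol `ξ`. -/
def isPNE {n : ℕ} {R : Type*} [DecidableEq R] (Strat : Fin n → Set (Finset R))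
    (ξ : Protocol n) (Cr : R → Finset (Fin n) → ℝ) (P : Fin n → Finset R) : Prop :=
  (∀ i, P i ∈ Strat i) ∧
    ∀ i, ∀ Q ∈ Strat i, privCost ξ Cr P i ≤ privCost ξ Cr (Function.update P i Q) i

/-- Cost shares are nonnegative and only users pay. -/
def ValidShares {n : ℕ} (ξ : Protocol n) : Prop :=
  ∀ C : Finset (Fin n) → ℝ, IsCostFn n C →
    ∀ (S : Finset (Fin n)) (i : Fin n), 0 ≤ ξ C S i ∧ (i ∉ S → ξ C S i = 0)

/-- The protocol is budget-balanced. -/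
def BudgetBalanced {n : ℕ} (ξ : Protocol n) : Prop :=
  ∀ C : Finset (Fin n) → ℝ, IsCostFn n C →
    ∀ S : Finset (Fin n), ∑ i ∈ S, ξ C S i = C S

/-- The protocol is stable: every induced cost sharing game admits a pure
Nash equilibrium. -/
def StableProtocol {n : ℕ} (ξ : Protocol n) : Prop :=
  ∀ (R : Type) [Fintype R] [DecidableEq R]
    (Strat : Fin n → Set (Finset R)) (Cr : R → Finset (Fin n) → ℝ),
    (∀ i, (Strat i).Nonempty) → (∀ r, IsCostFn n (Cr r)) →
    ∃ P : Fin n → Finset R, isPNE Strat ξ Cr P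

/-- `H_k`, the `k`-th harmonic number. -/
noncomputable def harmonicNum (k : ℕ) : ℝ := ∑ l ∈ Finset.Icc 1 k, (1 / (l : ℝ))

/-!
Take a shared resource whose cost is `1` when all `n` players use it and `0` otherwise, and let
`q_k` be the share of this unit cost that `ξ` charges player `k` when everybody uses it. Budget
balance gives a player `k` with `q_k ≤ 1/n`. Give only this player the alternative of a private
resource of cost `c = q_k + ε/n²`, slightly more than `q_k`. Leaving for the private resource
then costs `k` more than staying, so the only equilibrium has everybody on the shared resource,
at social cost `1`, whereas the optimum sends `k` away, at social cost `c`, and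
`(n - ε) c ≤ (n - ε)(1/n + ε/n²) ≤ 1`.
-/

noncomputable section

def unanimityCost (n : ℕ) (S : Finset (Fin n)) : ℝ := if S = univ then 1 else 0

def linearCost (n : ℕ) (c : ℝ) (S : Finset (Fin n)) : ℝ := c * #S

section CostFunctions

variable {n : ℕ}

theorem isCostFn_unanimityCost [NeZero n] : IsCostFn n (unanimityCost n) := by
  refine ⟨if_neg univ_nonempty.ne_empty.symm, fun T => ?_, fun T U hTU => ?_⟩
  · unfold unanimityCost; split_ifs <;> norm_num
  · unfold unanimityCost
    split_ifs with hT hU <;> norm_num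
    exact hU (univ_subset_iff.1 (hT ▸ hTU))

theorem anonymousCost_unanimityCost : AnonymousCost n (unanimityCost n) := by
  intro X Y hXY
  simp only [unanimityCost, ← card_eq_iff_eq_univ, hXY]

theorem convexCost_unanimityCost [NeZero n] : ConvexCost n (unanimityCost n) := by
  intro X Y i hXY hiY
  have hYu : Y ≠ univ := fun h => hiY (h ▸ mem_univ i)
  have hXu : X ≠ univ := fun h => hYu (univ_subset_iff.1 (h ▸ hXY))
  rw [show unanimityCost n X = 0 from if_neg hXu, show unanimityCost n Y = 0 from if_neg hYu]
  linarith [isCostFn_unanimityCost.2.2 _ _ (insert_subset_insert i hXY)]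

theorem isCostFn_linearCost {c : ℝ} (hc : 0 ≤ c) : IsCostFn n (linearCost n c) :=
  ⟨by simp [linearCost], fun _ => by unfold linearCost; positivity,
    fun _ _ h => mul_le_mul_of_nonneg_left (by exact_mod_cast card_le_card h) hc⟩

theorem anonymousCost_linearCost (c : ℝ) : AnonymousCost n (linearCost n c) := by
  intro X Y h
  simp [linearCost, h]

theorem convexCost_linearCost (c : ℝ) : ConvexCost n (linearCost n c) := by
  intro X Y i hXY hiY
  simp only [linearCost, card_insert_of_notMem hiY, card_insert_of_notMem fun h => hiY (hXY h)]
  push_cast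
  linarith

end CostFunctions

namespace BudgetBalanced

variable {n : ℕ} {ξ : Protocol n} {C : Finset (Fin n) → ℝ}

theorem share_singleton (hbb : BudgetBalanced ξ) (hC : IsCostFn n C) (i : Fin n) :
    ξ C {i} i = C {i} := by
  simpa using hbb C hC {i}

theorem exists_card_mul_share_le [NeZero n] (hbb : BudgetBalanced ξ) (hC : IsCostFn n C) :
    ∃ i, n * ξ C univ i ≤ C univ := by
  obtain ⟨i, -, hi⟩ := exists_le_of_sum_le (f := fun i => n * ξ C univ i)
    (g := fun _ => C univ) univ_nonempty (by simp [← mul_sum, hbb C hC univ])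
  exact ⟨i, hi⟩

end BudgetBalanced

namespace OptOutGame

variable {n : ℕ} (k : Fin n)

def strat : Fin n → Set (Finset (Fin 2)) := fun i => if i = k then {{0}, {1}} else {{0}}

def cost (n : ℕ) (c : ℝ) : Fin 2 → Finset (Fin n) → ℝ := ![unanimityCost n, linearCost n c]

def shared : Fin n → Finset (Fin 2) := fun _ => {0}

def optOut : Fin n → Finset (Fin 2) := Function.update shared k {1}

theorem shared_mem (i : Fin n) : shared i ∈ strat k i := by
  unfold strat shared; split_ifs <;> simp

theorem optOut_mem (i : Fin n) : optOut k i ∈ strat k i := by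
  rcases eq_or_ne i k with rfl | h
  · simp [optOut, strat]
  · simp [optOut, strat, shared, h]

theorem eq_shared_or_eq_optOut {P : Fin n → Finset (Fin 2)} (hP : ∀ i, P i ∈ strat k i) :
    P = shared ∨ P = optOut k := by
  have hother : ∀ i ≠ k, P i = {0} := fun i hi => by simpa [strat, hi] using hP i
  have hk : P k = {0} ∨ P k = {1} := by simpa [strat] using hP k
  rcases hk with hk | hk
  · left
    funext i
    rcases eq_or_ne i k with rfl | hi
    exacts [hk, hother i hi]
  · right
    funext i
    rcases eq_or_ne i k with rfl | hi
    · simp [optOut, hk]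
    · simp [optOut, shared, hi, hother i hi]

theorem isCostFn_cost [NeZero n] {c : ℝ} (hc : 0 ≤ c) : ∀ r, IsCostFn n (cost n c r) :=
  Fin.forall_fin_two.2 ⟨isCostFn_unanimityCost, isCostFn_linearCost hc⟩

theorem anonymousCost_cost (c : ℝ) : ∀ r, AnonymousCost n (cost n c r) :=
  Fin.forall_fin_two.2 ⟨anonymousCost_unanimityCost, anonymousCost_linearCost c⟩

theorem convexCost_cost [NeZero n] (c : ℝ) : ∀ r, ConvexCost n (cost n c r) :=
  Fin.forall_fin_two.2 ⟨convexCost_unanimityCost, convexCost_linearCost c⟩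

theorem users_shared_zero : users (shared (n := n)) 0 = univ := by
  ext; simp [users, shared]

theorem users_shared_one : users (shared (n := n)) 1 = ∅ := by
  ext; simp [users, shared]

theorem users_optOut_zero : users (optOut k) 0 = univ.erase k := by
  ext i; rcases eq_or_ne i k with rfl | h <;> simp [users, optOut, shared, Function.update_apply, *]

theorem users_optOut_one : users (optOut k) 1 = {k} := by
  ext i; rcases eq_or_ne i k with rfl | h <;> simp [users, optOut, shared, Function.update_apply, *]

theorem socCost_shared [NeZero n] (c : ℝ) : socCost (cost n c) shared = 1 := by
  simp [socCost, cost, users_shared_zero, users_shared_one, unanimityCost, linearCost]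

theorem socCost_optOut (c : ℝ) : socCost (cost n c) (optOut k) = c := by
  have hne : univ.erase k ≠ univ := (erase_ssubset (mem_univ k)).ne
  simp [socCost, cost, users_optOut_zero, users_optOut_one, unanimityCost, linearCost, hne]

theorem eq_shared_of_isPNE {ξ : Protocol n} (hbb : BudgetBalanced ξ) {c : ℝ} (hc : 0 ≤ c)
    (hq : ξ (unanimityCost n) univ k < c) {P : Fin n → Finset (Fin 2)}
    (hP : isPNE (strat k) ξ (cost n c) P) : P = shared := by
  refine (eq_shared_or_eq_optOut k hP.1).resolve_right ?_
  rintro rfl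
  have hstay : privCost ξ (cost n c) (optOut k) k = c := by
    rw [privCost, optOut, Function.update_self, sum_singleton, ← optOut, users_optOut_one]
    simp [cost, hbb.share_singleton (isCostFn_linearCost hc), linearCost]
  have hleave : privCost ξ (cost n c) (Function.update (optOut k) k {0}) k =
      ξ (unanimityCost n) univ k := by
    have : Function.update (optOut k) k {0} = shared := by simp [optOut, shared]
    simp [privCost, this, cost, users_shared_zero]
  have := hP.2 k {0} (by simp [strat])
  linarith

end OptOutGame

end

open OptOutGame in
theorem uniform_pos_lower_bound_supermodular_general {n : ℕ} (hn : 2 ≤ n)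
    (ξ : Protocol n) (hξ : ValidShares ξ) (hbb : BudgetBalanced ξ)
    (ε : ℝ) (hε : ε ∈ Set.Ioo (0 : ℝ) 1) :
    ∃ (m : ℕ) (Strat : Fin n → Set (Finset (Fin m)))
      (Cr : Fin m → Finset (Fin n) → ℝ),
      (∀ i, (Strat i).Nonempty) ∧ (∀ r, IsCostFn n (Cr r)) ∧
      (∀ r, AnonymousCost n (Cr r)) ∧
      (∀ r, ConvexCost n (Cr r)) ∧
      ∃ Qopt : Fin n → Finset (Fin m),
        (∀ i, Qopt i ∈ Strat i) ∧
        (∀ Q : Fin n → Finset (Fin m), (∀ i, Q i ∈ Strat i) →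
          socCost Cr Qopt ≤ socCost Cr Q) ∧
        0 < socCost Cr Qopt ∧
        ∀ P : Fin n → Finset (Fin m), isPNE Strat ξ Cr P →
          ((n : ℝ) - ε) * socCost Cr Qopt ≤ socCost Cr P := by
  have : NeZero n := ⟨by omega⟩
  obtain ⟨hε0, hε1⟩ := hε
  have hn' : (2 : ℝ) ≤ n := by exact_mod_cast hn
  obtain ⟨k, hkq⟩ := hbb.exists_card_mul_share_le isCostFn_unanimityCost
  set q := ξ (unanimityCost n) univ k
  have hq1 : q ≤ 1 / n := by
    rw [le_div_iff₀ (by positivity), mul_comm]; simpa [unanimityCost] using hkq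
  have hq0 : 0 ≤ q := (hξ _ isCostFn_unanimityCost univ k).1
  have hδ0 : 0 < ε / n ^ 2 := by positivity
  have hδ1 : ε / n ^ 2 ≤ 1 / 4 := by
    rw [div_le_iff₀ (by positivity)]; nlinarith
  set c := q + ε / n ^ 2
  have hc0 : 0 < c := add_pos_of_nonneg_of_pos hq0 hδ0
  have hc1 : c ≤ 1 := by
    have : 1 / (n : ℝ) ≤ 1 / 2 := one_div_le_one_div_of_le two_pos hn'
    linarith
  have hbound : ((n : ℝ) - ε) * c ≤ 1 :=
    calc ((n : ℝ) - ε) * c ≤ (n - ε) * (1 / n + ε / n ^ 2) :=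
          mul_le_mul_of_nonneg_left (by linarith) (by linarith)
      _ = 1 - ε ^ 2 / n ^ 2 := by field_simp; ring
      _ ≤ 1 := by linarith [div_nonneg (sq_nonneg ε) (sq_nonneg (n : ℝ))]
  refine ⟨2, strat k, cost n c, fun i => ⟨_, shared_mem k i⟩, isCostFn_cost hc0.le,
    anonymousCost_cost c, convexCost_cost c, optOut k, optOut_mem k, ?_, ?_, ?_⟩
  · intro Q hQ
    rcases eq_shared_or_eq_optOut k hQ with rfl | rfl
    · rw [socCost_optOut, socCost_shared]; exact hc1
    · rfl
  · rwa [socCost_optOut]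
  · intro P hP
    rw [eq_shared_of_isPNE k hbb hc0.le (by linarith) hP, socCost_shared, socCost_optOut]
    exact hbound

/-- No uniform cost sharing protocol has price of stability below `n - ε` on
games with anonymous convex costs. -/
theorem uniform_pos_lower_bound_supermodular {n : ℕ} (hn : 2 ≤ n)
    (ξ : Protocol n) (hξ : ValidShares ξ) (hbb : BudgetBalanced ξ)
    (hstable : StableProtocol ξ)
    (ε : ℝ) (hε : ε ∈ Set.Ioo (0 : ℝ) 1) :
    ∃ (m : ℕ) (Strat : Fin n → Set (Finset (Fin m)))
      (Cr : Fin m → Finset (Fin n) → ℝ),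
      (∀ i, (Strat i).Nonempty) ∧ (∀ r, IsCostFn n (Cr r)) ∧
      (∀ r, AnonymousCost n (Cr r)) ∧
      (∀ r, ConvexCost n (Cr r)) ∧
      ∃ Qopt : Fin n → Finset (Fin m),
        (∀ i, Qopt i ∈ Strat i) ∧
        (∀ Q : Fin n → Finset (Fin m), (∀ i, Q i ∈ Strat i) →
          socCost Cr Qopt ≤ socCost Cr Q) ∧
        0 < socCost Cr Qopt ∧
        ∀ P : Fin n → Finset (Fin m), isPNE Strat ξ Cr P →
          ((n : ℝ) - ε) * socCost Cr Qopt ≤ socCost Cr P :=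
  uniform_pos_lower_bound_supermodular_general hn ξ hξ hbb ε hε
end

section
/- For every uniform, budget-balanced, stable cost sharing protocol ξ on the player set N = {1,2} and every real a ≥ 1, there exists a 2-player resource allocation model with anonymous convex cost functions such that, in the induced cost sharing game with cost shares given by ξ, there is a pure Nash equilibrium P and a socially optimal strategy vector Q̂ with C(Q̂) > 0 and C(P) ≥ a · C(Q̂). Consequently, no uniform cost sharing protocol achieves a bounded price of anarchy on 2-player games with anonymous convex cost functions. -/
open Finset

/-!
Take five resources: three whose cost is `0, 1, K` for `0, 1, 2` users and two costing `2` per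
user. Player `0` chooses `{0, 2}` or `{1, 3}`, player `1` chooses `{0, 1}` or `{2, 4}`. In
`P = ({0, 2}, {0, 1})` the players share resource `0` and each uses one more cheap resource
alone. A unilateral deviation moves the player onto the other player's lone cheap resource,
where its share `ξ_i(C, {0, 1})` is the same as on resource `0`, and replaces a lone cost `1`
by a lone cost `2`. Since budget balance makes a lone user pay the full cost, `P` is an
equilibrium for every budget-balanced protocol. It costs `K + 2`, while for `K ≥ 4` the optimum
`({1, 3}, {2, 4})` costs `6`; take `K = 6a`.
-/

def cardCost {n : ℕ} (f : ℕ → ℝ) : Finset (Fin n) → ℝ := fun T => f #T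

section CardCost

variable {n : ℕ} {f : ℕ → ℝ}

lemma isCostFn_cardCost (h0 : f 0 = 0) (hf : Monotone f) : IsCostFn n (cardCost f) :=
  ⟨by simp [cardCost, h0], fun _ => h0 ▸ hf (Nat.zero_le _),
    fun _ _ hTU => hf (card_le_card hTU)⟩

lemma anonymousCost_cardCost : AnonymousCost n (cardCost f) := by
  intro X Y h
  simp only [cardCost, h]

lemma convexCost_cardCost (hf : Monotone fun k => f (k + 1) - f k) :
    ConvexCost n (cardCost f) := by
  intro X Y i hXY hiY
  simp only [cardCost, card_insert_of_notMem hiY, card_insert_of_notMem fun h => hiY (hXY h)]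
  exact hf (card_le_card hXY)

end CardCost

lemma BudgetBalanced.share_singleton_s16 {n : ℕ} {ξ : Protocol n} (hbb : BudgetBalanced ξ)
    {C : Finset (Fin n) → ℝ} (hC : IsCostFn n C) (i : Fin n) : ξ C {i} i = C {i} := by
  simpa using hbb C hC {i}

lemma privCost_of_eq_pair {n : ℕ} {R : Type*} [DecidableEq R] (ξ : Protocol n)
    (Cr : R → Finset (Fin n) → ℝ) {P : Fin n → Finset R} {i : Fin n} {r s : R}
    (hP : P i = {r, s}) (hrs : r ≠ s) :
    privCost ξ Cr P i = ξ (Cr r) (users P r) i + ξ (Cr s) (users P s) i := by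
  rw [privCost, hP, sum_pair hrs]

lemma card_users_fin_two {R : Type*} [DecidableEq R] (P : Fin 2 → Finset R) (r : R) :
    #(users P r) = (if r ∈ P 0 then 1 else 0) + (if r ∈ P 1 then 1 else 0) := by
  rw [users, card_filter, Fin.sum_univ_two]

/-- Extends `0, 1, K` on `0, 1, 2` users to a function on `ℕ` that is convex for `K ≥ 2`. -/
noncomputable def jumpCost (K : ℝ) (k : ℕ) : ℝ := k + (K - 2) * k.choose 2

lemma jumpCost_succ_sub (K : ℝ) (k : ℕ) :
    jumpCost K (k + 1) - jumpCost K k = 1 + (K - 2) * k := by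
  simp only [jumpCost, Nat.choose_succ_succ', Nat.choose_one_right]
  push_cast
  ring

section Game

variable {K : ℝ}

noncomputable def poaCost (K : ℝ) (r : Fin 5) : Finset (Fin 2) → ℝ :=
  cardCost (![jumpCost K, jumpCost K, jumpCost K, fun k => 2 * k, fun k => 2 * k] r)

def poaEquilibrium : Fin 2 → Finset (Fin 5) := ![{0, 2}, {0, 1}]

def poaOptimum : Fin 2 → Finset (Fin 5) := ![{1, 3}, {2, 4}]

def poaStrat (i : Fin 2) : Set (Finset (Fin 5)) := {poaEquilibrium i, poaOptimum i}

lemma isCostFn_poaCost (hK : 2 ≤ K) (r : Fin 5) : IsCostFn 2 (poaCost K r) := by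
  have hjump : IsCostFn 2 (cardCost (jumpCost K)) := by
    refine isCostFn_cardCost (by simp [jumpCost]) (monotone_nat_of_le_succ fun k => ?_)
    have := jumpCost_succ_sub K k
    have : 0 ≤ (K - 2) * k := mul_nonneg (by linarith) k.cast_nonneg
    linarith
  have hlin : IsCostFn 2 (cardCost fun k : ℕ => 2 * (k : ℝ)) :=
    isCostFn_cardCost (by simp) fun _ _ h => by gcongr
  fin_cases r <;> assumption

lemma anonymousCost_poaCost (r : Fin 5) : AnonymousCost 2 (poaCost K r) :=
  anonymousCost_cardCost

lemma convexCost_poaCost (hK : 2 ≤ K) (r : Fin 5) : ConvexCost 2 (poaCost K r) := by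
  have hjump : ConvexCost 2 (cardCost (jumpCost K)) := by
    refine convexCost_cardCost fun k l hkl => ?_
    simp only [jumpCost_succ_sub]
    gcongr
  have hlin : ConvexCost 2 (cardCost fun k : ℕ => 2 * (k : ℝ)) :=
    convexCost_cardCost fun k l _ => by push_cast; linarith
  fin_cases r <;> assumption

lemma socCost_poaEquilibrium : socCost (poaCost K) poaEquilibrium = K + 2 := by
  simp [socCost, Fin.sum_univ_five, poaCost, poaEquilibrium, cardCost, jumpCost,
    card_users_fin_two]
  ring

lemma socCost_poaOptimum : socCost (poaCost K) poaOptimum = 6 := by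
  simp [socCost, Fin.sum_univ_five, poaCost, poaOptimum, cardCost, jumpCost, card_users_fin_two]
  norm_num

lemma socCost_poaOptimum_le (hK : 4 ≤ K) {Q : Fin 2 → Finset (Fin 5)}
    (hQ : ∀ i, Q i ∈ poaStrat i) : socCost (poaCost K) poaOptimum ≤ socCost (poaCost K) Q := by
  have h0 : Q 0 = {0, 2} ∨ Q 0 = {1, 3} := hQ 0
  have h1 : Q 1 = {0, 1} ∨ Q 1 = {2, 4} := hQ 1
  rw [socCost_poaOptimum]
  rcases h0 with h0 | h0 <;> rcases h1 with h1 | h1 <;>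
    simp [socCost, Fin.sum_univ_five, poaCost, cardCost, jumpCost, card_users_fin_two, h0, h1] <;>
    linarith

lemma privCost_poaEquilibrium {ξ : Protocol 2} (hbb : BudgetBalanced ξ) (hK : 2 ≤ K)
    (i : Fin 2) : privCost ξ (poaCost K) poaEquilibrium i = ξ (poaCost K 0) univ i + 1 := by
  match i with
  | 0 =>
    rw [privCost_of_eq_pair _ _ rfl (by decide), show users poaEquilibrium 0 = univ by decide,
      show users poaEquilibrium 2 = {0} by decide,
      hbb.share_singleton_s16 (isCostFn_poaCost hK _)]
    simp [poaCost, cardCost, jumpCost]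
  | 1 =>
    rw [privCost_of_eq_pair _ _ rfl (by decide), show users poaEquilibrium 0 = univ by decide,
      show users poaEquilibrium 1 = {1} by decide,
      hbb.share_singleton_s16 (isCostFn_poaCost hK _)]
    simp [poaCost, cardCost, jumpCost]

lemma privCost_update_poaOptimum {ξ : Protocol 2} (hbb : BudgetBalanced ξ) (hK : 2 ≤ K)
    (i : Fin 2) :
    privCost ξ (poaCost K) (Function.update poaEquilibrium i (poaOptimum i)) i =
      ξ (poaCost K 0) univ i + 2 := by
  match i with
  | 0 =>
    rw [privCost_of_eq_pair (r := 1) (s := 3) _ _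
      (Function.update_self 0 (poaOptimum 0) poaEquilibrium) (by decide),
      show users (Function.update poaEquilibrium 0 (poaOptimum 0)) 1 = univ by decide,
      show users (Function.update poaEquilibrium 0 (poaOptimum 0)) 3 = {0} by decide,
      hbb.share_singleton_s16 (isCostFn_poaCost hK _),
      show poaCost K 1 = poaCost K 0 from rfl]
    simp [poaCost, cardCost]
  | 1 =>
    rw [privCost_of_eq_pair (r := 2) (s := 4) _ _
      (Function.update_self 1 (poaOptimum 1) poaEquilibrium) (by decide),
      show users (Function.update poaEquilibrium 1 (poaOptimum 1)) 2 = univ by decide,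
      show users (Function.update poaEquilibrium 1 (poaOptimum 1)) 4 = {1} by decide,
      hbb.share_singleton_s16 (isCostFn_poaCost hK _),
      show poaCost K 2 = poaCost K 0 from rfl]
    simp [poaCost, cardCost]

lemma isPNE_poaEquilibrium {ξ : Protocol 2} (hbb : BudgetBalanced ξ) (hK : 2 ≤ K) :
    isPNE poaStrat ξ (poaCost K) poaEquilibrium := by
  refine ⟨fun i => Set.mem_insert _ _, ?_⟩
  rintro i Q (rfl | rfl)
  · rw [Function.update_eq_self]
  · rw [privCost_poaEquilibrium hbb hK, privCost_update_poaOptimum hbb hK]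
    linarith

end Game

theorem uniform_poa_unbounded_general
    (ξ : Protocol 2) (hbb : BudgetBalanced ξ)
    (a : ℝ) (ha : 1 ≤ a) :
    ∃ (m : ℕ) (Strat : Fin 2 → Set (Finset (Fin m)))
      (Cr : Fin m → Finset (Fin 2) → ℝ),
      (∀ i, (Strat i).Nonempty) ∧ (∀ r, IsCostFn 2 (Cr r)) ∧
      (∀ r, AnonymousCost 2 (Cr r)) ∧ (∀ r, ConvexCost 2 (Cr r)) ∧
      ∃ (P Qopt : Fin 2 → Finset (Fin m)),
        isPNE Strat ξ Cr P ∧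
        (∀ i, Qopt i ∈ Strat i) ∧
        (∀ Q : Fin 2 → Finset (Fin m), (∀ i, Q i ∈ Strat i) →
          socCost Cr Qopt ≤ socCost Cr Q) ∧
        0 < socCost Cr Qopt ∧
        a * socCost Cr Qopt ≤ socCost Cr P := by
  have hK2 : 2 ≤ 6 * a := by linarith
  have hK4 : 4 ≤ 6 * a := by linarith
  have hPNE := isPNE_poaEquilibrium hbb hK2
  refine ⟨5, poaStrat, poaCost (6 * a), fun i => ⟨_, hPNE.1 i⟩,
    isCostFn_poaCost hK2, anonymousCost_poaCost, convexCost_poaCost hK2,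
    poaEquilibrium, poaOptimum, hPNE,
    fun i => Set.mem_insert_of_mem _ rfl,
    fun _ hQ => socCost_poaOptimum_le hK4 hQ, ?_, ?_⟩
  · rw [socCost_poaOptimum]
    norm_num
  · rw [socCost_poaOptimum, socCost_poaEquilibrium]
    linarith

/-- No uniform cost sharing protocol achieves a bounded price of anarchy on
2-player games with anonymous convex costs. -/
theorem uniform_poa_unbounded
    (ξ : Protocol 2) (hξ : ValidShares ξ) (hbb : BudgetBalanced ξ)
    (hstable : StableProtocol ξ)
    (a : ℝ) (ha : 1 ≤ a) :
    ∃ (m : ℕ) (Strat : Fin 2 → Set (Finset (Fin m)))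
      (Cr : Fin m → Finset (Fin 2) → ℝ),
      (∀ i, (Strat i).Nonempty) ∧ (∀ r, IsCostFn 2 (Cr r)) ∧
      (∀ r, AnonymousCost 2 (Cr r)) ∧ (∀ r, ConvexCost 2 (Cr r)) ∧
      ∃ (P Qopt : Fin 2 → Finset (Fin m)),
        isPNE Strat ξ Cr P ∧
        (∀ i, Qopt i ∈ Strat i) ∧
        (∀ Q : Fin 2 → Finset (Fin m), (∀ i, Q i ∈ Strat i) →
          socCost Cr Qopt ≤ socCost Cr Q) ∧
        0 < socCost Cr Qopt ∧
        a * socCost Cr Qopt ≤ socCost Cr P :=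
  uniform_poa_unbounded_general ξ hbb a ha
end
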